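/- arXiv:0811.4295 — 4 statements merged into one kernel-verified Lean document; each statement's English description precedes it below -/
import Mathlib

section
/- Let (B, ρˡ, ρʳ) be an algebroid structure on an A-module M, and suppose there exist some ρˡ-connection and some ρʳ-connection on M. Then there exist a ρˡ-connection Dˡ and a ρʳ-connection Dʳ on M such that B(σ, σ') = Dˡ(σ, σ') - Dʳ(σ', σ) for all σ, σ' ∈ M. -/
/-- `B : M → N → P` is `R`-bilinear. -/
def IsRBilinear (R : Type*) {M N P : Type*} [Semiring R]
    [AddCommMonoid M] [Module R M] [AddCommMonoid N] [Module R N]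
    [AddCommMonoid P] [Module R P] (B : M → N → P) : Prop :=
  (∀ x y z, B (x + y) z = B x z + B y z) ∧
  (∀ (r : R) (x : M) (z : N), B (r • x) z = r • B x z) ∧
  (∀ (x : M) (y z : N), B x (y + z) = B x y + B x z) ∧
  (∀ (r : R) (x : M) (y : N), B x (r • y) = r • B x y)

variable {R A M : Type*} [CommRing R] [CommRing A] [Algebra R A]
  [AddCommGroup M] [Module R M] [Module A M] [IsScalarTower R A M]

/-- `D` is a `ρ`-connection on the `A`-module `M`. -/
def IsConnection (ρ : M →ₗ[A] Derivation R A A) (D : M → M → M) : Prop :=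
  IsRBilinear R D ∧
  (∀ (f : A) (σ γ : M), D (f • σ) γ = f • D σ γ) ∧
  (∀ (f : A) (σ γ : M), D σ (f • γ) = (ρ σ) f • γ + f • D σ γ)

/-- `(B, ρˡ, ρʳ)` is an algebroid structure on the `A`-module `M`. -/
def IsAlgebroid (ρl ρr : M →ₗ[A] Derivation R A A) (B : M → M → M) : Prop :=
  IsRBilinear R B ∧
  ∀ (f g : A) (σ σ' : M),
    B (f • σ) (g • σ') =
      (f * (ρl σ) g) • σ' - (g * (ρr σ') f) • σ + (f * g) • B σ σ'

/-- if an algebroid `(B, ρˡ, ρʳ)` on `M` admits some `ρˡ`-connection and some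
`ρʳ`-connection, then there exist a `ρˡ`-connection `Dˡ` and a `ρʳ`-connection `Dʳ` such
that `B(σ, σ') = Dˡ(σ, σ') - Dʳ(σ', σ)` for all `σ, σ'`. -/
theorem algebroid_bracket_eq_connections_diff
    (ρl ρr : M →ₗ[A] Derivation R A A) (B : M → M → M)
    (hB : IsAlgebroid ρl ρr B)
    (hexl : ∃ Dl : M → M → M, IsConnection ρl Dl)
    (hexr : ∃ Dr : M → M → M, IsConnection ρr Dr) :
    ∃ (Dl Dr : M → M → M), IsConnection ρl Dl ∧ IsConnection ρr Dr ∧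
      ∀ σ σ' : M, B σ σ' = Dl σ σ' - Dr σ' σ := by

  obtain ⟨Dl, hDl⟩ := hexl
  obtain ⟨⟨hBa1, hBs1, hBa2, hBs2⟩, hLeib⟩ := hB
  obtain ⟨⟨hDa1, hDs1, hDa2, hDs2⟩, hDf, hDc⟩ := hDl
  -- Leibniz specializations
  have hBl : ∀ (f : A) (σ σ' : M), B (f • σ) σ' = -((ρr σ') f • σ) + f • B σ σ' := by
    intro f σ σ'
    have := hLeib f 1 σ σ'
    simpa [Derivation.map_one_eq_zero, sub_eq_add_neg] using this
  have hBr : ∀ (f : A) (σ σ' : M), B σ (f • σ') = (ρl σ) f • σ' + f • B σ σ' := by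
    intro f σ σ'
    have := hLeib 1 f σ σ'
    simpa [sub_eq_add_neg] using this
  refine ⟨Dl, fun σ' σ => Dl σ σ' - B σ σ', ⟨⟨hDa1, hDs1, hDa2, hDs2⟩, hDf, hDc⟩, ?_, ?_⟩
  · refine ⟨⟨?_, ?_, ?_, ?_⟩, ?_, ?_⟩ <;> intros <;> beta_reduce
    · rw [hDa2, hBa2]; abel
    · rw [hDs2, hBs2, smul_sub]
    · rw [hDa1, hBa1]; abel
    · rw [hDs1, hBs1, smul_sub]
    · rw [hDc, hBr, smul_sub]; abel
    · rw [hDf, hBl, smul_sub]; abel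
  · intro σ σ'; beta_reduce; abel
end

section
/- Let (B, ρˡ, ρʳ) be an algebroid structure on an A-module M, and assume 2 is invertible in A. Define B^A(σ, σ') = (1/2) • (B(σ, σ') - B(σ', σ)) and ρ^A = (1/2) • (ρˡ + ρʳ). Then B^A is skew-symmetric and (B^A, ρ^A, ρ^A) is an algebroid structure on M, i.e. B^A(f • σ, g • σ') = (f * ρ^A(σ) g) • σ' - (g * ρ^A(σ') f) • σ + (f * g) • B^A(σ, σ') for all f, g ∈ A and σ, σ' ∈ M. -/
variable {R A M : Type*} [CommRing R] [CommRing A] [Algebra R A]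
  [AddCommGroup M] [Module R M] [Module A M] [IsScalarTower R A M]

/-- if `2` is invertible in `A`, the skew-symmetrization
`B^A(σ, σ') = ½ • (B(σ, σ') - B(σ', σ))` with the anchor `ρ^A = ½ • (ρˡ + ρʳ)` is a
skew-symmetric algebroid structure on `M`. -/
theorem skew_symmetrization_isAlgebroid [Invertible (2 : A)]
    (ρl ρr : M →ₗ[A] Derivation R A A) (B : M → M → M)
    (hB : IsAlgebroid ρl ρr B) :
    (∀ σ σ' : M,
        (⅟2 : A) • (B σ σ' - B σ' σ) = -((⅟2 : A) • (B σ' σ - B σ σ'))) ∧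
    IsAlgebroid ((⅟2 : A) • (ρl + ρr)) ((⅟2 : A) • (ρl + ρr))
      (fun σ σ' => (⅟2 : A) • (B σ σ' - B σ' σ)) := by
  obtain ⟨⟨h1, h2, h3, h4⟩, hL⟩ := hB
  refine ⟨fun σ σ' => by rw [← smul_neg, neg_sub], ?_, ?_⟩
  · refine ⟨fun x y z => ?_, fun r x z => ?_, fun x y z => ?_, fun r x y => ?_⟩ <;> dsimp only
    · rw [h1, h3, smul_sub, smul_sub, smul_add, smul_add]; module
    · rw [h2, h4, ← smul_sub, smul_comm]
    · rw [h3, h1, smul_sub, smul_sub, smul_add, smul_add]; module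
    · rw [h4, h2, ← smul_sub, smul_comm]
  · intro f g σ σ'
    simp only [hL f g σ σ', hL g f σ' σ, LinearMap.smul_apply, LinearMap.add_apply,
      Derivation.add_apply, Derivation.smul_apply, smul_eq_mul]
    module
end

section
/- Let M be an A-module with an A-linear anchor ρ : M → Der(A) and a ρ-connection D on M. Define B(σ, σ') = D(σ, σ') + D(σ', σ). Then B is a symmetric R-bilinear bracket and (B, ρ, -ρ) is an algebroid structure on M, i.e. B(f • σ, g • σ') = (f * ρ(σ) g) • σ' + (g * ρ(σ') f) • σ + (f * g) • B(σ, σ') for all f, g ∈ A and σ, σ' ∈ M. -/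
variable {R A M : Type*} [CommRing R] [CommRing A] [Algebra R A]
  [AddCommGroup M] [Module R M] [Module A M] [IsScalarTower R A M]

/-- for a `ρ`-connection `D` on `M`, the symmetric product
`B(σ, σ') = D(σ, σ') + D(σ', σ)` is a symmetric bracket and `(B, ρ, -ρ)` is an algebroid
structure on `M`; in particular
`B(f • σ, g • σ') = (f * ρ(σ) g) • σ' + (g * ρ(σ') f) • σ + (f * g) • B(σ, σ')`. -/
theorem symmetric_product_isAlgebroid
    (ρ : M →ₗ[A] Derivation R A A) (D : M → M → M)
    (hD : IsConnection ρ D) :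
    (∀ σ σ' : M, D σ σ' + D σ' σ = D σ' σ + D σ σ') ∧
    IsAlgebroid ρ (-ρ) (fun σ σ' => D σ σ' + D σ' σ) ∧
    (∀ (f g : A) (σ σ' : M),
        D (f • σ) (g • σ') + D (g • σ') (f • σ)
          = (f * (ρ σ) g) • σ' + (g * (ρ σ') f) • σ
            + (f * g) • (D σ σ' + D σ' σ)) := by

  obtain ⟨⟨hadd1, hsmul1, hadd2, hsmul2⟩, hleft, hright⟩ := hD
  have key : ∀ (f g : A) (σ σ' : M),
      D (f • σ) (g • σ') + D (g • σ') (f • σ)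
        = (f * (ρ σ) g) • σ' + (g * (ρ σ') f) • σ
          + (f * g) • (D σ σ' + D σ' σ) := by
    intro f g σ σ'
    rw [hleft, hright, hleft, hright, smul_add, smul_add, smul_add]
    simp only [smul_smul]
    rw [mul_comm g f]
    abel
  refine ⟨fun σ σ' => add_comm _ _, ⟨⟨?_, ?_, ?_, ?_⟩, ?_⟩, key⟩
  · intro x y z; simp only [hadd1 x y z, hadd2 z x y]; abel
  · intro r x z; simp only [hsmul1, hsmul2, smul_add]
  · intro x y z; simp only [hadd2 x y z, hadd1 y z x]; abel
  · intro r x y; simp only [hsmul1, hsmul2, smul_add]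
  · intro f g σ σ'
    simp only [LinearMap.neg_apply, Derivation.neg_apply, mul_neg, neg_smul,
      sub_neg_eq_add]
    exact key f g σ σ'
end

section
/- Let d be a vector space over a field K, let κ : d → K be a linear functional, let B : d × d → d be a bilinear map with B(σ, σ) = 0 for all σ, and let h ∈ d. Define Ω_κ((σ, υ), (σ', υ')) = υ'(σ) - υ(σ') - κ(B(σ, σ')) on d × (d →ₗ K). Then the pair (σ, υ) with σ = h and υ : d → K given by υ(σ') = κ(B(σ', h)) is the unique element of d × (d →ₗ K) satisfying Ω_κ((σ, υ), (σ', υ')) = υ'(h) for all (σ', υ') ∈ d × (d →ₗ K). -/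
/-- The symplectic section of the prolongation `𝔡* × 𝔡 × 𝔡*` evaluated at a point
`κ ∈ 𝔡*`: `Ω_κ((σ, υ), (σ', υ')) = υ'(σ) - υ(σ') - κ(B(σ, σ'))`. -/
def OmegaKappa {K V : Type*} [Field K] [AddCommGroup V] [Module K V]
    (κ : V →ₗ[K] K) (B : V →ₗ[K] V →ₗ[K] V)
    (x y : V × (V →ₗ[K] K)) : K :=
  y.2 x.1 - x.2 y.1 - κ (B x.1 y.1)

/-- the pair `(h, υ)` with `υ(σ') = κ(B(σ', h))` is the unique solution of
the symplectic Hamilton equation `Ω_κ((σ, υ), ·) = (·).2 h` on `d × (d →ₗ K)`. -/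
theorem hamilton_equation_unique_solution
    {K V : Type*} [Field K] [AddCommGroup V] [Module K V]
    (κ : V →ₗ[K] K) (B : V →ₗ[K] V →ₗ[K] V)
    (halt : ∀ σ : V, B σ σ = 0) (h : V) :
    (∀ y : V × (V →ₗ[K] K),
        OmegaKappa κ B (h, κ ∘ₗ B.flip h) y = y.2 h) ∧
    (∀ x : V × (V →ₗ[K] K),
        (∀ y : V × (V →ₗ[K] K), OmegaKappa κ B x y = y.2 h) →
          x = (h, κ ∘ₗ B.flip h)) := by
  have hanti : ∀ a b : V, B a b = - B b a := by
    intro a b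
    have h0 : B b a + B a b = 0 := by
      have := halt (a + b)
      simpa [map_add, halt] using this
    exact eq_neg_of_add_eq_zero_right h0
  constructor
  · intro y
    simp only [OmegaKappa, LinearMap.comp_apply, LinearMap.flip_apply]
    rw [hanti h y.1, map_neg]
    ring
  · intro x hx
    have hx1 : x.1 = h := by
      rw [← sub_eq_zero, ← Module.forall_dual_apply_eq_zero_iff K (x.1 - h)]
      intro φ
      have := hx (0, φ)
      simp only [OmegaKappa, map_zero, LinearMap.zero_apply, LinearMap.map_zero] at this
      simp only [map_sub]
      linear_combination this
    refine Prod.ext hx1 (LinearMap.ext fun σ' => ?_)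
    have := hx (σ', 0)
    simp only [OmegaKappa, LinearMap.zero_apply, hx1] at this
    have h2 : x.2 σ' = - κ (B h σ') := by linear_combination -this
    rw [h2, hanti h σ', map_neg]
    simp [LinearMap.flip_apply]
end
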